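/- arXiv:1711.08663 — 4 statements merged into one kernel-verified Lean document; each statement's English description precedes it below -/
import Mathlib

section
/- Let (a_n)_{n≥1} be a strictly increasing sequence of positive integers that is quasi-arithmetic of degree 1. Then for no real number α does the sequence ({a_n α})_{n≥1} of fractional parts have Poissonian pair correlations. -/
open Filter

/-- Distance to the nearest integer. -/
noncomputable def nearestIntDist (x : ℝ) : ℝ := |x - round x|

open Classical in
/-- The pair correlation function
`R₂([-s,s],(x_n),N) = (1/N) · #{1 ≤ i ≠ j ≤ N : ‖x_i − x_j‖ ≤ s/N}`. -/
noncomputable def pairCorrFn (x : ℕ → ℝ) (s : ℝ) (N : ℕ) : ℝ :=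
  (1 / (N : ℝ)) * (((Finset.Icc 1 N ×ˢ Finset.Icc 1 N).filter
    (fun p => p.1 ≠ p.2 ∧ nearestIntDist (x p.1 - x p.2) ≤ s / N)).card : ℝ)

/-- A sequence has Poissonian pair correlations if `R₂ → 2s` for every `s > 0`. -/
def HasPoissonianPairCorrelations (x : ℕ → ℝ) : Prop :=
  ∀ s : ℝ, 0 < s → Tendsto (fun N : ℕ => pairCorrFn x s N) atTop (nhds (2 * s))

/-- The `d`-dimensional arithmetic progression
`{h + ∑ j r_j k_j : 0 ≤ r_j < s_j}`. -/
def genAP (d : ℕ) (h : ℤ) (k s : Fin d → ℤ) : Set ℤ :=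
  {x | ∃ r : Fin d → ℤ, (∀ j, 0 ≤ r j ∧ r j < s j) ∧ x = h + ∑ j, r j * k j}

/-- A sequence `(a_n)_{n ≥ 1}` of positive integers is quasi-arithmetic of degree `d`
if there are constants `C, K > 0` and a strictly increasing sequence `(N_i)` of
positive integers such that for every `i` some subset of `{a_1, …, a_{N_i}}` of
cardinality at least `C·N_i` is contained in a `d`-dimensional arithmetic progression
of size at most `K·N_i`. -/
def QuasiArithmetic (a : ℕ → ℕ) (d : ℕ) : Prop :=
  ∃ C K : ℝ, 0 < C ∧ 0 < K ∧ ∃ N : ℕ → ℕ, StrictMono N ∧ (∀ i, 0 < N i) ∧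
    ∀ i, ∃ A : Finset ℤ,
      (∀ x ∈ A, ∃ n, 1 ≤ n ∧ n ≤ N i ∧ (a n : ℤ) = x) ∧
      C * (N i : ℝ) ≤ (A.card : ℝ) ∧
      ∃ h : ℤ, ∃ k s : Fin d → ℤ,
        (↑A : Set ℤ) ⊆ genAP d h k s ∧ ((∏ j, s j : ℤ) : ℝ) ≤ K * (N i : ℝ)

/-!
Put `x_n = {a_n α}` and fix a scale `N = N_i`: at least `C N` of `a_1, …, a_N` lie in a progression
`h + r k`, `0 ≤ r < L ≤ K N`. Fix a constant `T ≥ 4K/C` and, by Dirichlet, pick `d ≤ L/T` with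
`‖d k α‖ ≤ T/L`. Sorting `r` by its residue mod `d` and its interval of length `d T` gives about
`2L/T` blocks, so by Cauchy–Schwarz `≳ N T` ordered pairs of distinct such `a_n` share a block;
their `r`-differences are `t d` with `0 < |t| < T`, hence a single `t` occurs `≳ N` times. All these
pairs are at the same distance `δ = ‖t d k α‖ ≤ T²/(C N)`, so `N R₂([-s,s], N)` jumps by `≳ N` at
`s = N δ`, which stays bounded. Poissonian pair correlations rule this out: a fixed finite grid of
short windows covers the bounded range, and for large `N` the function `R₂` grows by less than the
jump on each of them.
-/

open Finset

lemma nearestIntDist_nonneg (x : ℝ) : 0 ≤ nearestIntDist x := abs_nonneg _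

lemma nearestIntDist_sub_intCast (x : ℝ) (n : ℤ) : nearestIntDist (x - n) = nearestIntDist x := by
  simp [nearestIntDist, round_sub_intCast]

lemma nearestIntDist_fract_sub_fract (x y : ℝ) :
    nearestIntDist (Int.fract x - Int.fract y) = nearestIntDist (x - y) := by
  rw [← nearestIntDist_sub_intCast (x - y) (⌊x⌋ - ⌊y⌋)]
  simp only [Int.fract, Int.cast_sub]
  ring_nf

lemma nearestIntDist_intCast_mul_le (n : ℤ) (x : ℝ) :
    nearestIntDist (n * x) ≤ |n| * nearestIntDist x :=
  calc nearestIntDist (n * x) ≤ |n * x - ((n * round x : ℤ) : ℝ)| := round_le _ _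
    _ = |(n : ℝ)| * nearestIntDist x := by
      rw [nearestIntDist, ← abs_mul]; push_cast; ring_nf
    _ = |n| * nearestIntDist x := by rw [Int.cast_abs]

noncomputable def pairsAtDistance (x : ℕ → ℝ) (N : ℕ) (δ : ℝ) : Finset (ℕ × ℕ) :=
  {p ∈ Icc 1 N ×ˢ Icc 1 N | p.1 ≠ p.2 ∧ nearestIntDist (x p.1 - x p.2) = δ}

lemma pairCorrFn_eq_zero_of_neg (x : ℕ → ℝ) {s : ℝ} (hs : s < 0) (N : ℕ) :
    pairCorrFn x s N = 0 := by
  rcases N.eq_zero_or_pos with rfl | hN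
  · simp [pairCorrFn]
  have hsN : s / N < 0 := div_neg_of_neg_of_pos hs (by exact_mod_cast hN)
  simp only [pairCorrFn, mul_eq_zero, Nat.cast_eq_zero, card_eq_zero, filter_eq_empty_iff]
  exact Or.inr fun p _ h => (nearestIntDist_nonneg _).not_gt (h.2.trans_lt hsN)

lemma HasPoissonianPairCorrelations.tendsto_pairCorrFn {x : ℕ → ℝ}
    (hx : HasPoissonianPairCorrelations x) {s : ℝ} (hs : s ≠ 0) :
    Tendsto (pairCorrFn x s) atTop (nhds (2 * max s 0)) := by
  rcases hs.lt_or_gt with hs | hs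
  · simp [max_eq_right hs.le, funext (pairCorrFn_eq_zero_of_neg x hs)]
  · simpa [max_eq_left hs.le] using hx s hs

lemma card_pairsAtDistance_le (x : ℕ → ℝ) {N : ℕ} (hN : 0 < N) {s₁ s₂ δ : ℝ}
    (h₁ : s₁ / N < δ) (h₂ : δ ≤ s₂ / N) :
    (#(pairsAtDistance x N δ) : ℝ) ≤ N * (pairCorrFn x s₂ N - pairCorrFn x s₁ N) := by
  have hN' : (N : ℝ) ≠ 0 := by positivity
  set P := Icc 1 N ×ˢ Icc 1 N
  have hcount : ∀ s, N * pairCorrFn x s N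
      = #{p ∈ P | p.1 ≠ p.2 ∧ nearestIntDist (x p.1 - x p.2) ≤ s / N} := by
    intro s
    rw [pairCorrFn, ← mul_assoc, mul_one_div_cancel hN', one_mul]
  have hdisj : Disjoint (pairsAtDistance x N δ)
      {p ∈ P | p.1 ≠ p.2 ∧ nearestIntDist (x p.1 - x p.2) ≤ s₁ / N} := by
    rw [pairsAtDistance, disjoint_filter]
    rintro p - ⟨-, rfl⟩ ⟨-, h⟩
    exact h.not_gt h₁
  have hsub : pairsAtDistance x N δ ∪
      {p ∈ P | p.1 ≠ p.2 ∧ nearestIntDist (x p.1 - x p.2) ≤ s₁ / N} ⊆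
      {p ∈ P | p.1 ≠ p.2 ∧ nearestIntDist (x p.1 - x p.2) ≤ s₂ / N} := by
    intro p hp
    simp only [pairsAtDistance, mem_union, mem_filter] at hp ⊢
    rcases hp with ⟨hp, hne, rfl⟩ | ⟨hp, hne, hle⟩
    · exact ⟨hp, hne, h₂⟩
    · exact ⟨hp, hne, hle.trans (h₁.le.trans h₂)⟩
  have hcard := card_le_card hsub
  rw [card_union_of_disjoint hdisj] at hcard
  rw [mul_sub, hcount, hcount, le_sub_iff_add_le]
  exact_mod_cast hcard

lemma HasPoissonianPairCorrelations.eventually_card_pairsAtDistance_lt {x : ℕ → ℝ}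
    (hx : HasPoissonianPairCorrelations x) {c : ℝ} (hc : 0 < c) (V : ℝ) :
    ∀ᶠ N : ℕ in atTop, ∀ δ, 0 ≤ δ → N * δ ≤ V → (#(pairsAtDistance x N δ) : ℝ) < c * N := by
  obtain ⟨ε, hε, rfl⟩ : ∃ ε, 0 < ε ∧ c = 4 * ε := ⟨c / 4, by positivity, by ring⟩
  have hwindow : ∀ t : ℕ, ∀ᶠ N : ℕ in atTop,
      pairCorrFn x ((t + 1) * ε) N - pairCorrFn x (t * ε - ε / 2) N < 4 * ε := by
    intro t
    have h₁ : (t : ℝ) * ε - ε / 2 ≠ 0 := by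
      rcases t.eq_zero_or_pos with rfl | ht
      · simp [hε.ne']
      · have : (1 : ℝ) ≤ t := by exact_mod_cast ht
        nlinarith
    have h₂ : ((t : ℝ) + 1) * ε ≠ 0 := by positivity
    refine ((HasPoissonianPairCorrelations.tendsto_pairCorrFn hx h₂).sub
      (HasPoissonianPairCorrelations.tendsto_pairCorrFn hx h₁)).eventually
      (gt_mem_nhds ?_)
    rw [max_eq_left (by positivity)]
    linarith [le_max_left ((t : ℝ) * ε - ε / 2) 0]
  filter_upwards [(eventually_all_finset (range (⌊V / ε⌋₊ + 1))).2 fun t _ => hwindow t,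
    eventually_gt_atTop 0] with N hN hN0 δ hδ hδV
  set t := ⌊N * δ / ε⌋₊
  have ht : t ∈ range (⌊V / ε⌋₊ + 1) :=
    mem_range.2 (Nat.lt_succ_of_le (Nat.floor_le_floor (by gcongr)))
  have hNpos : (0 : ℝ) < N := by exact_mod_cast hN0
  have hlow : (t : ℝ) * ε ≤ N * δ := by
    have := Nat.floor_le (R := ℝ) (a := N * δ / ε) (by positivity)
    rwa [le_div_iff₀ hε] at this
  have hhigh : N * δ < ((t : ℝ) + 1) * ε := by
    have := Nat.lt_floor_add_one (N * δ / ε)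
    rwa [div_lt_iff₀ hε] at this
  calc (#(pairsAtDistance x N δ) : ℝ)
      ≤ N * (pairCorrFn x ((t + 1) * ε) N - pairCorrFn x (t * ε - ε / 2) N) := by
        refine card_pairsAtDistance_le x hN0 ?_ ?_
        · rw [div_lt_iff₀ hNpos]; linarith
        · rw [le_div_iff₀ hNpos]; linarith
    _ < N * (4 * ε) := mul_lt_mul_of_pos_left (hN t ht) hNpos
    _ = 4 * ε * N := mul_comm _ _

lemma sq_card_le_card_image_mul_card_filter {α β : Type*} [DecidableEq α] [DecidableEq β]
    (s : Finset α) (f : α → β) :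
    #s ^ 2 ≤ #(s.image f) * #{p ∈ s ×ˢ s | f p.1 = f p.2} := by
  have hfibres : #{p ∈ s ×ˢ s | f p.1 = f p.2} = ∑ b ∈ s.image f, #{x ∈ s | f x = b} ^ 2 := by
    rw [card_eq_sum_card_fiberwise (f := fun p => f p.1) fun p hp =>
      mem_image_of_mem f (mem_product.1 (mem_filter.1 hp).1).1]
    refine sum_congr rfl fun b _ => ?_
    rw [sq, ← card_product, filter_filter]
    congr 1
    ext p
    simp only [mem_filter, mem_product]
    constructor
    · rintro ⟨⟨h₁, h₂⟩, hp, rfl⟩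
      exact ⟨⟨h₁, rfl⟩, h₂, hp.symm⟩
    · rintro ⟨⟨h₁, rfl⟩, h₂, hp⟩
      exact ⟨⟨h₁, h₂⟩, hp.symm, rfl⟩
  rw [hfibres, card_eq_sum_card_image f s]
  exact sq_sum_le_card_mul_sum_sq

def blockIndex (d T : ℕ) (x : ℤ) : ℤ × ℤ := (x % d, x / (d * T))

lemma mul_card_image_blockIndex_le {R : Finset ℤ} {L : ℤ} (hR : R ⊆ Ico 0 L) {d T : ℕ}
    (hdT : 0 < d * T) (hdTL : d * T ≤ L) :
    (T * #(R.image (blockIndex d T)) : ℤ) ≤ 2 * L := by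
  have hd : (0 : ℤ) < d := by exact_mod_cast Nat.pos_of_mul_pos_right hdT
  have hdT' : (0 : ℤ) < d * T := by exact_mod_cast hdT
  set q := (L - 1) / (d * T)
  have hsub : R.image (blockIndex d T) ⊆ Ico 0 (d : ℤ) ×ˢ Ico 0 (q + 1) := by
    intro z hz
    obtain ⟨x, hx, rfl⟩ := mem_image.1 hz
    obtain ⟨hx₀, hxL⟩ := mem_Ico.1 (hR hx)
    simp only [blockIndex, mem_product, mem_Ico]
    exact ⟨⟨Int.emod_nonneg _ hd.ne', Int.emod_lt_of_pos _ hd⟩, Int.ediv_nonneg hx₀ hdT'.le,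
      Int.lt_add_one_of_le (Int.ediv_le_ediv hdT' (by omega))⟩
  have hcard : (#(R.image (blockIndex d T)) : ℤ) ≤ d * (q + 1) := by
    have := card_le_card hsub
    rw [card_product, Int.card_Ico, Int.card_Ico] at this
    have hq : 0 ≤ q := Int.ediv_nonneg (by omega) hdT'.le
    zify [hq] at this
    simpa [Int.toNat_of_nonneg hd.le, Int.toNat_of_nonneg (by omega : 0 ≤ q + 1)] using this
  have hq : d * T * q ≤ L - 1 := Int.mul_ediv_self_le hdT'.ne'
  nlinarith

lemma exists_eq_mul_of_blockIndex_eq {d T : ℕ} (hdT : 0 < d * T) {x y : ℤ}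
    (h : blockIndex d T x = blockIndex d T y) : ∃ t : ℤ, x - y = t * d ∧ |t| < T := by
  simp only [blockIndex, Prod.mk.injEq] at h
  obtain ⟨t, ht⟩ := (Int.ModEq.dvd h.1.symm : (d : ℤ) ∣ x - y)
  refine ⟨t, by rw [ht, mul_comm], ?_⟩
  have hd : (0 : ℤ) < d := by exact_mod_cast Nat.pos_of_mul_pos_right hdT
  have hdT' : (0 : ℤ) < d * T := by exact_mod_cast hdT
  have hxy : |x - y| < d * T := by
    have hx := Int.emod_add_mul_ediv x (d * T)
    have hy := Int.emod_add_mul_ediv y (d * T)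
    rw [h.2] at hx
    rw [abs_lt]
    constructor <;> linarith [Int.emod_nonneg x hdT'.ne', Int.emod_nonneg y hdT'.ne',
      Int.emod_lt_of_pos x hdT', Int.emod_lt_of_pos y hdT']
  rw [ht, abs_mul, abs_of_pos hd] at hxy
  exact lt_of_mul_lt_mul_left hxy hd.le

lemma card_le_toNat_of_subset_Ico {R : Finset ℤ} {L : ℤ} (hR : R ⊆ Ico 0 L) : #R ≤ L.toNat := by
  simpa using card_le_card hR

lemma le_card_filter_ne_blockIndex_eq {R : Finset ℤ} {L : ℤ} (hR : R ⊆ Ico 0 L) {d T : ℕ}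
    (hdT : 0 < d * T) (hdTL : d * T ≤ L) (hTR : 4 * L ≤ T * #R) :
    (#R : ℝ) ^ 2 * T / (4 * L) ≤
      #{p ∈ R ×ˢ R | p.1 ≠ p.2 ∧ blockIndex d T p.1 = blockIndex d T p.2} := by
  set F := {p ∈ R ×ˢ R | blockIndex d T p.1 = blockIndex d T p.2}
  set E := {p ∈ R ×ˢ R | p.1 ≠ p.2 ∧ blockIndex d T p.1 = blockIndex d T p.2}
  have hCS := sq_card_le_card_image_mul_card_filter R (blockIndex d T)
  have himage := mul_card_image_blockIndex_le hR hdT hdTL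
  have hdiag : #F ≤ #E + #R := by
    rw [← diag_card R]
    refine (card_le_card fun p hp => ?_).trans (card_union_le _ _)
    rw [mem_filter] at hp
    by_cases h : p.1 = p.2
    · exact mem_union_right _ (mem_diag.2 ⟨(mem_product.1 hp.1).1, h⟩)
    · exact mem_union_left _ (mem_filter.2 ⟨hp.1, h, hp.2⟩)
  have hL : (0 : ℝ) < L := by
    exact_mod_cast (show (0 : ℤ) < d * T by exact_mod_cast hdT).trans_le hdTL
  have hCS' : (#R : ℝ) ^ 2 ≤ #(R.image (blockIndex d T)) * #F := by exact_mod_cast hCS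
  have himage' : (T : ℝ) * #(R.image (blockIndex d T)) ≤ 2 * L := by exact_mod_cast himage
  have hdiag' : (#F : ℝ) ≤ #E + #R := by exact_mod_cast hdiag
  have hTR' : 4 * (L : ℝ) ≤ T * #R := by exact_mod_cast hTR
  rw [div_le_iff₀ (by positivity)]
  nlinarith [mul_le_mul_of_nonneg_left hCS' (Nat.cast_nonneg (α := ℝ) T),
    mul_le_mul_of_nonneg_right himage' (Nat.cast_nonneg (α := ℝ) #F),
    mul_le_mul_of_nonneg_left hTR' (Nat.cast_nonneg (α := ℝ) #R)]

lemma exists_le_card_filter_sub_eq_mul {R : Finset ℤ} {L : ℤ} (hR : R ⊆ Ico 0 L) {d T : ℕ}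
    (hdT : 0 < d * T) (hdTL : d * T ≤ L) (hTR : 4 * L ≤ T * #R) :
    ∃ t : ℤ, t ≠ 0 ∧ |t| < T ∧ (#R : ℝ) ^ 2 / (8 * L) ≤ #{p ∈ R ×ˢ R | p.1 - p.2 = t * d} := by
  set E := {p ∈ R ×ˢ R | p.1 ≠ p.2 ∧ blockIndex d T p.1 = blockIndex d T p.2}
  set S := (Ioo (-(T : ℤ)) T).erase 0
  have hd : (0 : ℤ) < d := by exact_mod_cast Nat.pos_of_mul_pos_right hdT
  have hL : 0 < L := (show (0 : ℤ) < d * T by exact_mod_cast hdT).trans_le hdTL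
  have hT : 4 ≤ (T : ℤ) := by
    have : (#R : ℤ) ≤ L := by have := card_le_toNat_of_subset_Ico hR; omega
    nlinarith
  have hmaps : ∀ p ∈ E, (p.1 - p.2) / d ∈ S := by
    intro p hp
    obtain ⟨-, hne, hblock⟩ := mem_filter.1 hp
    obtain ⟨t, ht, htT⟩ := exists_eq_mul_of_blockIndex_eq hdT hblock
    rw [ht, Int.mul_ediv_cancel _ hd.ne', mem_erase, mem_Ioo, ← abs_lt]
    refine ⟨fun h => hne ?_, htT⟩
    rw [h, zero_mul, sub_eq_zero] at ht
    exact ht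
  have hS : S.Nonempty := ⟨1, mem_erase.2 ⟨one_ne_zero, mem_Ioo.2 ⟨by omega, by omega⟩⟩⟩
  have hScard : (#S : ℝ) ≤ 2 * T := by
    have : #S ≤ #(Ioo (-(T : ℤ)) T) := card_erase_le
    rw [Int.card_Ioo] at this
    have : (#S : ℤ) ≤ 2 * T := by omega
    exact_mod_cast this
  obtain ⟨t, htS, ht⟩ := exists_le_card_fiber_of_nsmul_le_card_of_maps_to hmaps hS
    (b := (#R : ℝ) ^ 2 / (8 * L)) (by
      have hLR : (0 : ℝ) < L := by exact_mod_cast hL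
      calc #S • ((#R : ℝ) ^ 2 / (8 * L)) ≤ 2 * T * ((#R : ℝ) ^ 2 / (8 * L)) := by
            rw [nsmul_eq_mul]; gcongr
        _ = (#R : ℝ) ^ 2 * T / (4 * L) := by field_simp; ring
        _ ≤ #E := le_card_filter_ne_blockIndex_eq hR hdT hdTL hTR)
  have hfibre : {p ∈ E | (p.1 - p.2) / d = t} ⊆ {p ∈ R ×ˢ R | p.1 - p.2 = t * d} := by
    intro p hp
    obtain ⟨hpE, rfl⟩ := mem_filter.1 hp
    obtain ⟨hpR, -, hblock⟩ := mem_filter.1 hpE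
    obtain ⟨t, ht, -⟩ := exists_eq_mul_of_blockIndex_eq hdT hblock
    refine mem_filter.2 ⟨hpR, ?_⟩
    rw [ht, Int.mul_ediv_cancel _ hd.ne']
  obtain ⟨ht0, htT⟩ := mem_erase.1 htS
  exact ⟨t, ht0, abs_lt.2 (mem_Ioo.1 htT), ht.trans (by exact_mod_cast card_le_card hfibre)⟩

lemma exists_popular_difference_nearestIntDist_le {R : Finset ℤ} {L : ℤ} (hR : R ⊆ Ico 0 L)
    {T : ℕ} (hT : 0 < T) (hTL : T ≤ L) (hTR : 4 * L ≤ T * #R) (β : ℝ) :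
    ∃ D : ℤ, D ≠ 0 ∧ nearestIntDist (D * β) ≤ T ^ 2 / L ∧
      (#R : ℝ) ^ 2 / (8 * L) ≤ #{p ∈ R ×ˢ R | p.1 - p.2 = D} := by
  have hT' : (0 : ℝ) < T := by exact_mod_cast hT
  have hTL' : (T : ℝ) ≤ L := by exact_mod_cast hTL
  set n := ⌊(L : ℝ) / T⌋₊
  obtain ⟨d, hd, hdn, hdβ⟩ :=
    Real.exists_nat_abs_mul_sub_round_le β (Nat.floor_pos.2 ((one_le_div hT').2 hTL'))
  have hdTL : (d : ℤ) * T ≤ L := by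
    have : (d : ℝ) ≤ L / T :=
      (Nat.cast_le.2 hdn).trans (Nat.floor_le (div_nonneg (hT'.le.trans hTL') hT'.le))
    rw [le_div_iff₀ hT'] at this
    exact_mod_cast this
  obtain ⟨t, ht0, htT, hcount⟩ := exists_le_card_filter_sub_eq_mul hR (by positivity) hdTL hTR
  refine ⟨t * d, mul_ne_zero ht0 (by positivity), ?_, hcount⟩
  have hn : 1 / ((n : ℝ) + 1) ≤ T / L := by
    rw [div_le_div_iff₀ (by positivity) (by linarith), one_mul]
    have := Nat.lt_floor_add_one ((L : ℝ) / T)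
    rw [div_lt_iff₀ hT'] at this
    linarith
  have htT' : ((|t| : ℤ) : ℝ) ≤ T := by exact_mod_cast htT.le
  calc nearestIntDist ((t * d : ℤ) * β) = nearestIntDist (t * (d * β)) := by push_cast; ring_nf
    _ ≤ |t| * nearestIntDist (d * β) := nearestIntDist_intCast_mul_le t _
    _ ≤ T * (T / L) := mul_le_mul htT' (hdβ.trans hn) (nearestIntDist_nonneg _) hT'.le
    _ = T ^ 2 / L := by ring

lemma card_filter_sub_eq_le_card_pairsAtDistance (a : ℕ → ℕ) (α : ℝ) {N : ℕ} {h k : ℤ}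
    (hk : k ≠ 0) {R : Finset ℤ} (hR : ∀ r ∈ R, ∃ n, 1 ≤ n ∧ n ≤ N ∧ (a n : ℤ) = h + r * k)
    {D : ℤ} (hD : D ≠ 0) :
    #{p ∈ R ×ˢ R | p.1 - p.2 = D} ≤
      #(pairsAtDistance (fun n => Int.fract ((a n : ℝ) * α)) N (nearestIntDist (D * k * α))) := by
  refine card_le_card_of_surjOn (fun ij => (((a ij.1 : ℤ) - h) / k, ((a ij.2 : ℤ) - h) / k)) ?_
  rintro ⟨r, r'⟩ hp
  obtain ⟨hrR, hdiff⟩ := mem_filter.1 (mem_coe.1 hp)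
  obtain ⟨hr, hr'⟩ := mem_product.1 hrR
  obtain ⟨i, hi₁, hiN, hi⟩ := hR r hr
  obtain ⟨j, hj₁, hjN, hj⟩ := hR r' hr'
  refine ⟨(i, j), mem_coe.2 ?_, ?_⟩
  · simp only [pairsAtDistance, mem_filter, mem_product, mem_Icc]
    refine ⟨⟨⟨hi₁, hiN⟩, hj₁, hjN⟩, fun hij => hD ?_, ?_⟩
    · rw [hij, hj] at hi
      rw [← hdiff, mul_right_cancel₀ hk (add_left_cancel hi), sub_self]
    · rw [nearestIntDist_fract_sub_fract, ← sub_mul]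
      congr 2
      have : ((a i : ℤ) : ℝ) - ((a j : ℤ) : ℝ) = ((D * k : ℤ) : ℝ) := by
        rw [← Int.cast_sub, hi, hj, ← hdiff]; ring_nf
      push_cast at this
      exact this
  · simp [hi, hj, Int.mul_ediv_cancel _ hk]

lemma genAP_one (h : ℤ) (k s : Fin 1 → ℤ) :
    genAP 1 h k s = {x | ∃ r, 0 ≤ r ∧ r < s 0 ∧ x = h + r * k 0} := by
  ext x
  simp only [genAP, Set.mem_ofPred_eq, Fin.forall_fin_one, Fin.sum_univ_one]
  constructor
  · rintro ⟨r, ⟨hr₀, hrs⟩, rfl⟩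
    exact ⟨r 0, hr₀, hrs, rfl⟩
  · rintro ⟨r, hr₀, hrs, rfl⟩
    exact ⟨fun _ => r, ⟨hr₀, hrs⟩, rfl⟩

lemma exists_many_pairsAtDistance_of_subset_genAP (a : ℕ → ℕ) (α : ℝ) {N : ℕ} {A : Finset ℤ}
    (hA : ∀ x ∈ A, ∃ n, 1 ≤ n ∧ n ≤ N ∧ (a n : ℤ) = x) {h : ℤ} {k s : Fin 1 → ℤ}
    (hAP : (A : Set ℤ) ⊆ genAP 1 h k s) {T : ℕ} (hT : 0 < T) (hTA : T ≤ #A)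
    (hTs : 4 * s 0 ≤ T * #A) :
    ∃ δ : ℝ, 0 ≤ δ ∧ #A * δ ≤ T ^ 2 ∧
      (#A : ℝ) ^ 2 ≤ 8 * s 0 * #(pairsAtDistance (fun n => Int.fract ((a n : ℝ) * α)) N δ) := by
  rw [genAP_one] at hAP
  set R := {r ∈ Ico 0 (s 0) | h + r * k 0 ∈ A}
  have hAR : #A ≤ #R := by
    refine (card_le_card fun x hx => ?_).trans (card_image_le (f := fun r => h + r * k 0))
    obtain ⟨r, hr₀, hrs, rfl⟩ := hAP hx
    exact mem_image_of_mem _ (mem_filter.2 ⟨mem_Ico.2 ⟨hr₀, hrs⟩, hx⟩)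
  have hRs : #R ≤ (s 0).toNat := card_le_toNat_of_subset_Ico (filter_subset _ _)
  have hk : k 0 ≠ 0 := by
    intro hk
    have : #A ≤ 1 := card_le_one.2 fun x hx y hy => by
      obtain ⟨r, -, -, rfl⟩ := hAP hx
      obtain ⟨r', -, -, rfl⟩ := hAP hy
      simp [hk]
    have : T * #A ≤ 1 * 1 := Nat.mul_le_mul (by omega) this
    omega
  have hTs' : 4 * s 0 ≤ T * #R := hTs.trans (by gcongr)
  obtain ⟨D, hD, hDβ, hcount⟩ := exists_popular_difference_nearestIntDist_le (filter_subset _ _) hT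
    (by omega) hTs' (k 0 * α)
  refine ⟨nearestIntDist (D * k 0 * α), nearestIntDist_nonneg _, ?_, ?_⟩
  · have hs : (0 : ℝ) < s 0 := by exact_mod_cast (show 0 < s 0 by omega)
    have hAs : (#A : ℝ) ≤ s 0 := by exact_mod_cast (show (#A : ℤ) ≤ s 0 by omega)
    rw [mul_assoc]
    calc (#A : ℝ) * nearestIntDist (D * (k 0 * α)) ≤ s 0 * (T ^ 2 / s 0) :=
          mul_le_mul hAs hDβ (nearestIntDist_nonneg _) hs.le
      _ = T ^ 2 := by field_simp
  · have hs : (0 : ℝ) < s 0 := by exact_mod_cast (show 0 < s 0 by omega)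
    have hpairs := card_filter_sub_eq_le_card_pairsAtDistance a α hk (R := R)
      (fun r hr => hA _ (mem_filter.1 hr).2) hD
    rw [div_le_iff₀ (by positivity)] at hcount
    calc (#A : ℝ) ^ 2 ≤ #R ^ 2 := by gcongr
      _ ≤ _ := hcount
      _ = 8 * s 0 * #{p ∈ R ×ˢ R | p.1 - p.2 = D} := by ring
      _ ≤ _ := by gcongr

lemma QuasiArithmetic.frequently_many_pairsAtDistance {a : ℕ → ℕ} (hqa : QuasiArithmetic a 1)
    (α : ℝ) : ∃ c V : ℝ, 0 < c ∧ ∃ᶠ N : ℕ in atTop, ∃ δ, 0 ≤ δ ∧ N * δ ≤ V ∧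
      c * N ≤ #(pairsAtDistance (fun n => Int.fract ((a n : ℝ) * α)) N δ) := by
  obtain ⟨C, K, hC, hK, N, hNmono, -, hN⟩ := hqa
  set T := ⌈4 * K / C⌉₊
  have hT : 0 < T := Nat.ceil_pos.2 (by positivity)
  have hKT : 4 * K ≤ C * T := by
    have := Nat.le_ceil (4 * K / C)
    rw [div_le_iff₀ hC] at this
    linarith
  refine ⟨C ^ 2 / (8 * K), T ^ 2 / C, by positivity,
    hNmono.tendsto_atTop.frequently (Eventually.frequently ?_)⟩
  filter_upwards [hNmono.tendsto_atTop.eventually_ge_atTop ⌈T / C⌉₊] with i hi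
  obtain ⟨A, hA, hCA, h, k, s, hAP, hs⟩ := hN i
  rw [Fin.prod_univ_one] at hs
  have hTN : (T : ℝ) ≤ C * N i := by
    have := (Nat.le_ceil _).trans (Nat.cast_le.2 hi : (⌈T / C⌉₊ : ℝ) ≤ N i)
    rwa [div_le_iff₀ hC, mul_comm] at this
  have hTA : T ≤ #A := by exact_mod_cast hTN.trans hCA
  have hTs : 4 * s 0 ≤ T * #A := by
    have : 4 * (s 0 : ℝ) ≤ T * #A := by nlinarith
    exact_mod_cast this
  obtain ⟨δ, hδ₀, hδ, hcount⟩ := exists_many_pairsAtDistance_of_subset_genAP a α hA hAP hT hTA hTs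
  refine ⟨δ, hδ₀, ?_, ?_⟩
  · rw [le_div_iff₀ hC]
    nlinarith
  · have hNi : (0 : ℝ) < N i := by
      have : (0 : ℝ) < T := by exact_mod_cast hT
      nlinarith
    have hsq : (C * N i) ^ 2 ≤ (#A : ℝ) ^ 2 := pow_le_pow_left₀ (by positivity) hCA 2
    have hpairs : 8 * (s 0 : ℝ) * #(pairsAtDistance (fun n => Int.fract ((a n : ℝ) * α)) (N i) δ)
        ≤ 8 * (K * N i) * #(pairsAtDistance (fun n => Int.fract ((a n : ℝ) * α)) (N i) δ) := by
      gcongr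
    rw [div_mul_eq_mul_div, div_le_iff₀ (by positivity)]
    nlinarith

theorem quasi_arithmetic_degree_one_not_poissonian_general
    (a : ℕ → ℕ)
    (hqa : QuasiArithmetic a 1) (α : ℝ) :
    ¬ HasPoissonianPairCorrelations (fun n => Int.fract ((a n : ℝ) * α)) := by
  intro hx
  obtain ⟨c, V, hc, hmany⟩ := QuasiArithmetic.frequently_many_pairsAtDistance hqa α
  obtain ⟨N, ⟨δ, hδ, hδV, hlower⟩, hupper⟩ := (hmany.and_eventually
    (HasPoissonianPairCorrelations.eventually_card_pairsAtDistance_lt hx hc V)).exists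
  exact (hlower.trans_lt (hupper δ hδ hδV)).false

/-- If `(a_n)_{n ≥ 1}` is a strictly increasing sequence of positive integers which is
quasi-arithmetic of degree 1, then for no real `α` does `({a_n α})_{n ≥ 1}` have
Poissonian pair correlations. -/
theorem quasi_arithmetic_degree_one_not_poissonian
    (a : ℕ → ℕ)
    (hmono : ∀ m n, 1 ≤ m → m < n → a m < a n)
    (hpos : ∀ n, 1 ≤ n → 0 < a n)
    (hqa : QuasiArithmetic a 1) (α : ℝ) :
    ¬ HasPoissonianPairCorrelations (fun n => Int.fract ((a n : ℝ) * α)) :=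
  quasi_arithmetic_degree_one_not_poissonian_general a hqa α
end

section
/- Let (a_n)_{n≥1} be a strictly increasing sequence of positive integers with positive upper density, i.e. limsup_{n→∞} n/a_n > 0. Then for no real number α does the sequence ({a_n α})_{n≥1} of fractional parts have Poissonian pair correlations. -/
open Filter

/-! If `a_N ≤ K N` for infinitely many `N`, consider the gaps `e = |a_i - a_j|` (`i, j ≤ N`)
with `‖e α‖ ≤ s₀ / N`, where `s₀ = 1 / (20 K)`; Poissonian pair correlations produce about
`2 s₀ N` pairs with such gaps.

If more than `5 K` distinct gaps occur, two of them (all lying in `[1, K N]`) differ by some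
`q ≤ N / 5`, so `‖q α‖ ≤ 2 s₀ / N`. Sorting the `a_i` by residue mod `q` and by blocks of length
`5 K q` leaves at most `2 N / 5` classes; two elements of a class differ by `t q` with `t < 5 K`,
hence are within `1 / (2 N)` of each other on the circle, and by Cauchy–Schwarz there are at least
`3 N / 2` such pairs, too many for `R₂([-1/2, 1/2]) → 1`.

Otherwise some gap `e` carries more than `N / (100 K²)` pairs. They all lie at the same distance
`‖e α‖`, so `s ↦ R₂([-s, s])` jumps by more than `1 / (100 K²)` at `s = N ‖e α‖ ≤ s₀`. As `s₀`
is fixed, finitely many windows of width `1 / (400 K²)` cover all possible jump points, and on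
each of them the increments of `R₂` converge to `2 × width`, which is too small. -/

open Finset

theorem norm_natAbs_nsmul_eq_norm_zsmul {G : Type*} [SeminormedAddGroup G] (z : ℤ) (g : G) :
    ‖z.natAbs • g‖ = ‖z • g‖ := by
  rcases Int.natAbs_eq z with h | h <;> conv_rhs => rw [h]
  · rw [natCast_zsmul]
  · rw [neg_zsmul, norm_neg, natCast_zsmul]

theorem nearestIntDist_fract_sub_fract_s1 (m n : ℕ) (α : ℝ) :
    nearestIntDist (Int.fract (m * α) - Int.fract (n * α)) =
      ‖((m : ℤ) - n).natAbs • (α : UnitAddCircle)‖ := by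
  rw [nearestIntDist, ← UnitAddCircle.norm_eq, AddCircle.coe_sub, AddCircle.coe_fract,
    AddCircle.coe_fract, ← AddCircle.coe_sub, norm_natAbs_nsmul_eq_norm_zsmul,
    ← AddCircle.coe_zsmul]
  congr 2
  rw [zsmul_eq_mul]
  push_cast
  ring

theorem card_filter_eq_eq_sum_sq {ι κ : Type*} [DecidableEq κ] (I : Finset ι) (g : ι → κ) :
    #{p ∈ I ×ˢ I | g p.1 = g p.2} = ∑ c ∈ I.image g, #{i ∈ I | g i = c} ^ 2 := by
  rw [card_eq_sum_card_fiberwise (f := fun p => g p.1) (t := I.image g)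
    fun p hp => mem_image_of_mem g (mem_product.1 (mem_filter.1 hp).1).1]
  refine sum_congr rfl fun c _ => ?_
  rw [sq, ← card_product]
  congr 1
  ext ⟨i, j⟩
  simp only [mem_filter, mem_product]
  constructor
  · rintro ⟨⟨⟨hi, hj⟩, hij⟩, rfl⟩
    exact ⟨⟨hi, rfl⟩, hj, hij.symm⟩
  · rintro ⟨⟨hi, rfl⟩, hj, hji⟩
    exact ⟨⟨⟨hi, hj⟩, hji.symm⟩, rfl⟩

theorem sq_card_le_card_image_mul {ι κ : Type*} [DecidableEq ι] [DecidableEq κ] (I : Finset ι)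
    (g : ι → κ) :
    #I ^ 2 ≤ #(I.image g) * (#{p ∈ I ×ˢ I | p.1 ≠ p.2 ∧ g p.1 = g p.2} + #I) := by
  have hdiag : #{p ∈ I ×ˢ I | g p.1 = g p.2} =
      #{p ∈ I ×ˢ I | p.1 ≠ p.2 ∧ g p.1 = g p.2} + #I := by
    rw [← diag_card (s := I), ← card_filter_add_card_filter_not (fun p : ι × ι => p.1 ≠ p.2),
      filter_filter, filter_filter]
    congr 2
    · ext p
      simp only [mem_filter, and_comm]
    · ext ⟨i, j⟩
      simp only [mem_filter, mem_product, mem_diag, ne_eq, not_not]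
      constructor
      · rintro ⟨⟨hi, -⟩, -, rfl⟩
        exact ⟨hi, rfl⟩
      · rintro ⟨hi, rfl⟩
        exact ⟨⟨hi, hi⟩, rfl, rfl⟩
  calc #I ^ 2 = (∑ c ∈ I.image g, #{i ∈ I | g i = c}) ^ 2 := by rw [← card_eq_sum_card_image]
    _ ≤ #(I.image g) * ∑ c ∈ I.image g, #{i ∈ I | g i = c} ^ 2 := sq_sum_le_card_mul_sum_sq
    _ = _ := by rw [← card_filter_eq_eq_sum_sq, hdiag]

theorem exists_lt_lt_add_of_lt_card {D : Finset ℕ} {L m : ℕ} (hD : ∀ e ∈ D, e < L * m)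
    (hL : L < #D) : ∃ e ∈ D, ∃ e' ∈ D, e < e' ∧ e' < e + m := by
  obtain ⟨e₀, he₀⟩ := card_pos.1 (show 0 < #D by omega)
  have hm : 0 < m := Nat.pos_of_mul_pos_left (Nat.zero_lt_of_lt (hD e₀ he₀))
  have hmaps : ∀ e ∈ D, e / m ∈ range L := fun e he =>
    mem_range.2 (Nat.div_lt_of_lt_mul (by simpa [mul_comm] using hD e he))
  obtain ⟨e, he, e', he', hne, hdiv⟩ :=
    exists_ne_map_eq_of_card_lt_of_maps_to (by rwa [card_range]) hmaps
  have close : ∀ x y : ℕ, x / m = y / m → y < x + m := by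
    intro x y h
    have := Nat.div_add_mod x m
    have := Nat.div_add_mod y m
    have := Nat.mod_lt y hm
    rw [h] at *
    omega
  rcases lt_or_gt_of_ne hne with h | h
  · exact ⟨e, he, e', he', h, close e e' hdiv⟩
  · exact ⟨e', he', e, he, h, close e' e hdiv.symm⟩

theorem exists_lt_mul_eq_sub_of_mod_eq_of_div_eq {x y q L : ℕ} (hq : 0 < q) (hL : 0 < L)
    (hxy : x ≤ y) (hmod : x % q = y % q) (hdiv : x / (L * q) = y / (L * q)) :
    ∃ t < L, y - x = t * q := by
  refine ⟨(y - x) / q, ?_, (Nat.div_mul_cancel ((Nat.modEq_iff_dvd' hxy).1 hmod)).symm⟩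
  rw [Nat.div_lt_iff_lt_mul hq]
  have := Nat.div_add_mod x (L * q)
  have := Nat.div_add_mod y (L * q)
  have := Nat.mod_lt y (Nat.mul_pos hL hq)
  rw [hdiv] at *
  omega

section Pairs

variable {G : Type*} [SeminormedAddCommGroup G] {a : ℕ → ℕ} {θ : G} {r r' : ℝ} {N : ℕ}

noncomputable def closePairs (a : ℕ → ℕ) (θ : G) (r : ℝ) (N : ℕ) : Finset (ℕ × ℕ) :=
  {p ∈ Icc 1 N ×ˢ Icc 1 N | p.1 ≠ p.2 ∧ ‖((a p.1 : ℤ) - a p.2).natAbs • θ‖ ≤ r}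

theorem closePairs_mono (h : r' ≤ r) : closePairs a θ r' N ⊆ closePairs a θ r N :=
  monotone_filter_right _ fun _ _ hp => ⟨hp.1, hp.2.trans h⟩

theorem mem_closePairs_of_mod_eq_of_div_eq {q L : ℕ} (hq : 0 < q) (hL : 0 < L)
    (hqθ : ‖q • θ‖ ≤ r) {i j : ℕ} (hi : i ∈ Icc 1 N) (hj : j ∈ Icc 1 N) (hij : i ≠ j)
    (hmod : a i % q = a j % q) (hdiv : a i / (L * q) = a j / (L * q)) :
    (i, j) ∈ closePairs a θ (L * r) N := by
  refine mem_filter.2 ⟨mem_product.2 ⟨hi, hj⟩, hij, ?_⟩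
  obtain ⟨t, htL, ht⟩ : ∃ t < L, ((a i : ℤ) - a j).natAbs = t * q := by
    rcases le_total (a i) (a j) with h | h
    · obtain ⟨t, htL, ht⟩ := exists_lt_mul_eq_sub_of_mod_eq_of_div_eq hq hL h hmod hdiv
      exact ⟨t, htL, by omega⟩
    · obtain ⟨t, htL, ht⟩ :=
        exists_lt_mul_eq_sub_of_mod_eq_of_div_eq hq hL h hmod.symm hdiv.symm
      exact ⟨t, htL, by omega⟩
  calc ‖((a i : ℤ) - a j).natAbs • θ‖ = ‖t • q • θ‖ := by rw [ht, mul_nsmul']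
    _ ≤ t * ‖q • θ‖ := norm_nsmul_le
    _ ≤ L * r := by gcongr

theorem sq_le_mul_card_closePairs {q L B : ℕ} (hq : 0 < q) (hL : 0 < L)
    (haB : ∀ i ∈ Icc 1 N, a i ≤ B) (hqθ : ‖q • θ‖ ≤ r) :
    N ^ 2 ≤ (B / L + q) * (#(closePairs a θ (L * r) N) + N) := by
  set g : ℕ → ℕ × ℕ := fun i => (a i % q, a i / (L * q))
  have hclasses : #((Icc 1 N).image g) ≤ B / L + q := calc
    _ ≤ #(range q ×ˢ range (B / (L * q) + 1)) := card_le_card <| image_subset_iff.2 fun i hi =>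
        mem_product.2 ⟨mem_range.2 (Nat.mod_lt _ hq),
          mem_range.2 (Nat.lt_succ_of_le (Nat.div_le_div_right (haB i hi)))⟩
    _ = q * (B / L / q) + q := by
        rw [card_product, card_range, card_range, Nat.div_div_eq_div_mul, mul_add_one]
    _ ≤ B / L + q := by gcongr; exact Nat.mul_div_le _ _
  have hpairs : #{p ∈ Icc 1 N ×ˢ Icc 1 N | p.1 ≠ p.2 ∧ g p.1 = g p.2} ≤
      #(closePairs a θ (L * r) N) := card_le_card fun p hp => by
    obtain ⟨hpN, hne, hg⟩ := mem_filter.1 hp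
    obtain ⟨hi, hj⟩ := mem_product.1 hpN
    exact mem_closePairs_of_mod_eq_of_div_eq hq hL hqθ hi hj hne (congrArg Prod.fst hg)
      (congrArg Prod.snd hg)
  calc N ^ 2 = #(Icc 1 N) ^ 2 := by simp
    _ ≤ _ := sq_card_le_card_image_mul _ g
    _ ≤ _ := by simp only [Nat.card_Icc, add_tsub_cancel_right] at hclasses hpairs ⊢; gcongr

noncomputable def closeGaps (a : ℕ → ℕ) (θ : G) (r : ℝ) (N : ℕ) : Finset ℕ :=
  (closePairs a θ r N).image fun p => ((a p.1 : ℤ) - a p.2).natAbs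

theorem closeGaps_subset (ha : StrictMonoOn a (Set.Ici 1)) :
    closeGaps a θ r N ⊆ {e ∈ Icc 1 (a N) | ‖e • θ‖ ≤ r} := by
  intro e he
  obtain ⟨p, hp, rfl⟩ := mem_image.1 he
  obtain ⟨hpN, hne, hr⟩ := mem_filter.1 hp
  obtain ⟨⟨hi₁, hiN⟩, ⟨hj₁, hjN⟩⟩ := And.imp mem_Icc.1 mem_Icc.1 (mem_product.1 hpN)
  have hane : a p.1 ≠ a p.2 := ha.injOn.ne hi₁ hj₁ hne
  have hai : a p.1 ≤ a N := ha.monotoneOn hi₁ (hi₁.trans hiN) hiN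
  have haj : a p.2 ≤ a N := ha.monotoneOn hj₁ (hj₁.trans hjN) hjN
  exact mem_filter.2 ⟨mem_Icc.2 ⟨by omega, by omega⟩, hr⟩

theorem three_mul_le_two_mul_card_closePairs (ha : StrictMonoOn a (Set.Ici 1)) {K : ℕ}
    (hK : 0 < K) (hN : 0 < N) (haN : a N ≤ K * N) (hgaps : 5 * K < #(closeGaps a θ r N)) :
    3 * N ≤ 2 * #(closePairs a θ ((5 * K : ℕ) * (2 * r)) N) := by
  have hgap := fun e (he : e ∈ closeGaps a θ r N) => mem_filter.1 (closeGaps_subset ha he)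
  obtain ⟨e, he, e', he', hlt, hclose⟩ := exists_lt_lt_add_of_lt_card (m := N / 5 + 1)
    (fun e he => calc
      e ≤ K * N := ((mem_Icc.1 (hgap e he).1).2).trans haN
      _ < 5 * K * (N / 5 + 1) := by
        rw [mul_comm 5 K, mul_assoc]
        exact Nat.mul_lt_mul_of_pos_left (Nat.lt_mul_div_succ N (show 0 < 5 by norm_num)) hK)
    hgaps
  have hqθ : ‖(e' - e) • θ‖ ≤ 2 * r := by
    rw [sub_nsmul _ hlt.le, ← sub_eq_add_neg, two_mul]
    exact (norm_sub_le _ _).trans (add_le_add (hgap e' he').2 (hgap e he).2)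
  have hsq := sq_le_mul_card_closePairs (L := 5 * K) (B := K * N) (by omega) (by positivity)
    (fun i hi => (ha.monotoneOn (mem_Icc.1 hi).1 hN (mem_Icc.1 hi).2).trans haN) hqθ
  rw [show K * N / (5 * K) = N / 5 by rw [mul_comm 5 K, Nat.mul_div_mul_left _ _ hK]] at hsq
  generalize #(closePairs a θ ((5 * K : ℕ) * (2 * r)) N) = P at hsq ⊢
  have hq : 5 * (N / 5 + (e' - e)) ≤ 2 * N := by omega
  have : N * (5 * N) ≤ N * (2 * (P + N)) := by
    nlinarith [Nat.mul_le_mul_right (P + N) hq]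
  have := Nat.le_of_mul_le_mul_left this hN
  omega

def pairsWithGap (a : ℕ → ℕ) (e N : ℕ) : Finset (ℕ × ℕ) :=
  {p ∈ Icc 1 N ×ˢ Icc 1 N | ((a p.1 : ℤ) - a p.2).natAbs = e}

theorem exists_lt_card_pairsWithGap {b : ℝ}
    (h : #(closeGaps a θ r N) * b < #(closePairs a θ r N)) :
    ∃ e ∈ closeGaps a θ r N, b < #(pairsWithGap a e N) := by
  obtain ⟨e, he, hb⟩ := exists_lt_card_fiber_of_nsmul_lt_card_of_maps_to (b := b)
    (fun p hp => mem_image_of_mem _ hp) (by rwa [nsmul_eq_mul])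
  refine ⟨e, he, hb.trans_le (Nat.cast_le.2 (card_le_card fun p hp => ?_))⟩
  obtain ⟨hpr, hpe⟩ := mem_filter.1 hp
  exact mem_filter.2 ⟨(mem_filter.1 hpr).1, hpe⟩

theorem card_closePairs_add_card_pairsWithGap_le {e : ℕ} (he : 0 < e) (hr' : r' < ‖e • θ‖)
    (hr : ‖e • θ‖ ≤ r) :
    #(closePairs a θ r' N) + #(pairsWithGap a e N) ≤ #(closePairs a θ r N) := by
  rw [← card_union_of_disjoint]
  · refine card_le_card (union_subset (closePairs_mono (hr'.le.trans hr)) fun p hp => ?_)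
    obtain ⟨hpN, rfl⟩ := mem_filter.1 hp
    exact mem_filter.2 ⟨hpN, fun h => by simp [h] at he, hr⟩
  · refine disjoint_left.2 fun p hp hp' => ?_
    obtain ⟨-, -, hpr'⟩ := mem_filter.1 hp
    obtain ⟨-, rfl⟩ := mem_filter.1 hp'
    exact hr'.not_ge hpr'

end Pairs

theorem pairCorrFn_fract_mul (a : ℕ → ℕ) (α s : ℝ) (N : ℕ) :
    pairCorrFn (fun n => Int.fract (a n * α)) s N =
      #(closePairs a (α : UnitAddCircle) (s / N) N) / N := by
  rw [pairCorrFn, one_div_mul_eq_div, closePairs]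
  congr 3
  ext p
  simp only [mem_filter, nearestIntDist_fract_sub_fract_s1]

theorem pairCorrFn_nonneg (x : ℕ → ℝ) (s : ℝ) (N : ℕ) : 0 ≤ pairCorrFn x s N := by
  unfold pairCorrFn
  positivity

theorem HasPoissonianPairCorrelations.eventually_pairCorrFn_sub_lt {x : ℕ → ℝ}
    (hx : HasPoissonianPairCorrelations x) {s s' b : ℝ} (hs : 0 < s) (hb : 2 * (s - s') < b) :
    ∀ᶠ N in atTop, pairCorrFn x s N - pairCorrFn x s' N < b := by
  obtain ⟨η, hη, rfl⟩ : ∃ η > 0, b = 2 * (s - s') + 2 * η :=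
    ⟨(b - 2 * (s - s')) / 2, by linarith, by ring⟩
  have hlow : ∀ᶠ N in atTop, 2 * s' - η < pairCorrFn x s' N := by
    rcases lt_or_ge 0 s' with hs' | hs'
    · exact (hx s' hs').eventually_const_lt (by linarith)
    · exact Eventually.of_forall fun N => by linarith [pairCorrFn_nonneg x s' N]
  filter_upwards [hlow, (hx s hs).eventually_lt_const (show 2 * s < 2 * s + η by linarith)]
    with N h₁ h₂
  linarith

theorem exists_frequently_le_mul_of_limsup_pos {a : ℕ → ℕ}
    (h : 0 < limsup (fun n : ℕ => (n : ℝ) / a n) atTop) :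
    ∃ K : ℕ, 0 < K ∧ ∃ᶠ N in atTop, 0 < N ∧ a N ≤ K * N := by
  set L := limsup (fun n : ℕ => (n : ℝ) / a n) atTop
  have hfreq : ∃ᶠ n : ℕ in atTop, L / 2 < n / a n :=
    frequently_lt_of_lt_limsup (isCoboundedUnder_le_of_le atTop fun n => by positivity)
      (half_lt_self h)
  obtain ⟨K, hK⟩ := exists_nat_gt (2 / L)
  refine ⟨K, (Nat.cast_pos (α := ℝ)).1 ((by positivity : (0 : ℝ) < 2 / L).trans hK),
    hfreq.mono fun n hn => ?_⟩
  have ha : (0 : ℝ) < a n :=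
    Nat.cast_pos.2 (Nat.pos_of_ne_zero fun h0 => by simp [h0] at hn; linarith)
  rw [lt_div_iff₀ ha] at hn
  have hn0 : (0 : ℝ) < n := by nlinarith
  refine ⟨(Nat.cast_pos (α := ℝ)).1 hn0, (Nat.cast_le (α := ℝ)).1 ?_⟩
  push_cast
  calc (a n : ℝ) ≤ 2 / L * n := by rw [div_mul_eq_mul_div, le_div_iff₀ h]; linarith
    _ ≤ K * n := by gcongr

theorem three_halves_le_pairCorrFn {a : ℕ → ℕ} (ha : StrictMonoOn a (Set.Ici 1)) {α : ℝ}
    {K N : ℕ} (hK : 0 < K) (hN : 0 < N) (haN : a N ≤ K * N)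
    (hgaps : 5 * K < #(closeGaps a (α : UnitAddCircle) (1 / (20 * K) / N) N)) :
    3 / 2 ≤ pairCorrFn (fun n => Int.fract (a n * α)) (1 / 2) N := by
  have h3 := three_mul_le_two_mul_card_closePairs ha hK hN haN hgaps
  rw [show ((5 * K : ℕ) : ℝ) * (2 * (1 / (20 * K) / N)) = 1 / 2 / N by
    push_cast; field_simp; ring] at h3
  rw [pairCorrFn_fract_mul, le_div_iff₀ (by positivity)]
  have : (3 * N : ℝ) ≤ 2 * #(closePairs a (α : UnitAddCircle) (1 / 2 / N) N) := by
    exact_mod_cast h3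
  linarith

theorem exists_lt_pairCorrFn_sub {a : ℕ → ℕ} (ha : StrictMonoOn a (Set.Ici 1)) {α : ℝ} {N : ℕ}
    (hN : 0 < N) {s₀ ε c : ℝ} (hε : 0 < ε)
    (h : #(closeGaps a (α : UnitAddCircle) (s₀ / N) N) * c <
      pairCorrFn (fun n => Int.fract (a n * α)) s₀ N) :
    ∃ k ≤ ⌊s₀ / ε⌋₊, c < pairCorrFn (fun n => Int.fract (a n * α)) ((k + 1) * ε) N -
      pairCorrFn (fun n => Int.fract (a n * α)) ((k - 1) * ε) N := by
  set θ : UnitAddCircle := ↑α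
  have hN' : (0 : ℝ) < N := Nat.cast_pos.2 hN
  rw [pairCorrFn_fract_mul, lt_div_iff₀ hN', mul_assoc] at h
  obtain ⟨e, he, hcard⟩ := exists_lt_card_pairsWithGap h
  obtain ⟨he0, heθ⟩ := mem_filter.1 (closeGaps_subset ha he)
  set u := N * ‖e • θ‖
  have hu : u ≤ s₀ := by rwa [le_div_iff₀ hN', mul_comm] at heθ
  set k := ⌊u / ε⌋₊
  have hku : k * ε ≤ u := (le_div_iff₀ hε).1 (Nat.floor_le (by positivity))
  have huk : u < (k + 1) * ε := (div_lt_iff₀ hε).1 (Nat.lt_floor_add_one _)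
  refine ⟨k, Nat.floor_le_floor (by gcongr), ?_⟩
  have hjump := card_closePairs_add_card_pairsWithGap_le (a := a) (N := N)
    (r' := (k - 1) * ε / N) (r := (k + 1) * ε / N) (mem_Icc.1 he0).1
    (by rw [div_lt_iff₀ hN', mul_comm]; linarith) (by rw [le_div_iff₀ hN', mul_comm]; linarith)
  rw [pairCorrFn_fract_mul, pairCorrFn_fract_mul, ← sub_div, lt_div_iff₀ hN']
  have : (#(closePairs a θ ((k - 1) * ε / N) N) : ℝ) + #(pairsWithGap a e N) ≤
      #(closePairs a θ ((k + 1) * ε / N) N) := by exact_mod_cast hjump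
  linarith

theorem positive_upper_density_not_poissonian_general
    (a : ℕ → ℕ)
    (hmono : ∀ m n, 1 ≤ m → m < n → a m < a n)
    (hdens : 0 < Filter.limsup (fun n : ℕ => (n : ℝ) / (a n : ℝ)) Filter.atTop)
    (α : ℝ) :
    ¬ HasPoissonianPairCorrelations (fun n => Int.fract ((a n : ℝ) * α)) := by
  intro hP
  have ha : StrictMonoOn a (Set.Ici 1) := fun m hm n _ hmn => hmono m n hm hmn
  obtain ⟨K, hK, hfreq⟩ := exists_frequently_le_mul_of_limsup_pos hdens
  have hK' : (0 : ℝ) < K := Nat.cast_pos.2 hK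
  set s₀ : ℝ := 1 / (20 * K)
  set c : ℝ := s₀ / (5 * K)
  have h₁ : ∀ᶠ N in atTop, s₀ < pairCorrFn (fun n => Int.fract ((a n : ℝ) * α)) s₀ N :=
    (hP s₀ (by positivity)).eventually_const_lt (by linarith [show 0 < s₀ by positivity])
  have h₂ : ∀ᶠ N in atTop, pairCorrFn (fun n => Int.fract ((a n : ℝ) * α)) (1 / 2) N < 3 / 2 :=
    (hP _ one_half_pos).eventually_lt_const (by norm_num)
  have h₃ : ∀ᶠ N in atTop, ∀ k ∈ Iic ⌊s₀ / (c / 8)⌋₊,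
      pairCorrFn (fun n => Int.fract ((a n : ℝ) * α)) ((k + 1) * (c / 8)) N -
        pairCorrFn (fun n => Int.fract ((a n : ℝ) * α)) ((k - 1) * (c / 8)) N < c :=
    (eventually_all_finset _).2 fun k _ => hP.eventually_pairCorrFn_sub_lt
      (by positivity) (by nlinarith [show 0 < c by positivity])
  obtain ⟨N, ⟨hN, haN⟩, hN₁, hN₂, hN₃⟩ := (hfreq.and_eventually (h₁.and (h₂.and h₃))).exists
  rcases le_or_gt #(closeGaps a (α : UnitAddCircle) (s₀ / N) N) (5 * K) with hgaps | hgaps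
  · have hcount : (#(closeGaps a (α : UnitAddCircle) (s₀ / N) N) : ℝ) * c ≤ s₀ :=
      calc _ ≤ ((5 * K : ℕ) : ℝ) * c := by gcongr
        _ = s₀ := by push_cast; simp only [c]; field_simp
    obtain ⟨k, hk, hjump⟩ :=
      exists_lt_pairCorrFn_sub ha hN (by positivity : 0 < c / 8) (hcount.trans_lt hN₁)
    linarith [hN₃ k (mem_Iic.2 hk)]
  · linarith [three_halves_le_pairCorrFn (α := α) ha hK hN haN hgaps]

/-- If `(a_n)_{n ≥ 1}` is a strictly increasing sequence of positive integers with
positive upper density, i.e. `limsup_{n → ∞} n / a_n > 0`, then for no real `α`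
does `({a_n α})_{n ≥ 1}` have Poissonian pair correlations. -/
theorem positive_upper_density_not_poissonian
    (a : ℕ → ℕ)
    (hmono : ∀ m n, 1 ≤ m → m < n → a m < a n)
    (hpos : ∀ n, 1 ≤ n → 0 < a n)
    (hdens : 0 < Filter.limsup (fun n : ℕ => (n : ℝ) / (a n : ℝ)) Filter.atTop)
    (α : ℝ) :
    ¬ HasPoissonianPairCorrelations (fun n => Int.fract ((a n : ℝ) * α)) :=
  positive_upper_density_not_poissonian_general a hmono hdens α
end

section
/- For every real number α, the sequence ({n α})_{n≥1} of fractional parts of the pure Kronecker sequence does not have Poissonian pair correlations. -/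
/-!
If `α = r / b` is rational, the indices `b, 2b, …, Mb` all give the point `0`, so with
`N = bM` these alone contribute `M(M - 1)/(bM) = (M - 1)/b` to `R₂`, which is unbounded.

If `α` is irrational, call `N` a record if `‖Nα‖ < ‖dα‖` for all `0 < d < N`; by Dirichlet's
theorem there are infinitely many. Let `q` minimise `‖dα‖` over `0 < d < N`. The residuals of
`qα` and `Nα` have opposite signs, since otherwise `‖(N - q)α‖ < ‖qα‖`. Hence the integer
`q · round (Nα) - N · round (qα)` is nonzero and of size at most `N‖qα‖ + q‖Nα‖ < 2N‖qα‖`,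
so every gap `‖(i - j)α‖` with `i ≠ j ≤ N` exceeds `1/(2N)` and `R₂([-s, s], N) = 0` for
`s ≤ 1/2` along all records.
-/

open Filter

open Finset

namespace nearestIntDist

@[simp] lemma zero : nearestIntDist 0 = 0 := by simp [nearestIntDist]

lemma le_abs_sub_intCast (x : ℝ) (m : ℤ) : nearestIntDist x ≤ |x - m| := round_le x m

@[simp] lemma add_intCast (x : ℝ) (m : ℤ) : nearestIntDist (x + m) = nearestIntDist x := by
  simp only [nearestIntDist, round_add_intCast, Int.cast_add, add_sub_add_right_eq_sub]

lemma neg_le (x : ℝ) : nearestIntDist (-x) ≤ nearestIntDist x :=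
  calc nearestIntDist (-x) ≤ |-x - ((-round x : ℤ) : ℝ)| := le_abs_sub_intCast _ _
    _ = nearestIntDist x := by rw [nearestIntDist, Int.cast_neg, neg_sub_neg, abs_sub_comm]

@[simp] lemma neg (x : ℝ) : nearestIntDist (-x) = nearestIntDist x :=
  le_antisymm (neg_le x) (by simpa using neg_le (-x))

lemma sub_comm (x y : ℝ) : nearestIntDist (x - y) = nearestIntDist (y - x) := by
  rw [← neg, neg_sub]

lemma fract_sub_fract (x y : ℝ) :
    nearestIntDist (Int.fract x - Int.fract y) = nearestIntDist (x - y) := by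
  have : Int.fract x - Int.fract y = x - y + ((⌊y⌋ - ⌊x⌋ : ℤ) : ℝ) := by
    rw [Int.fract, Int.fract]; push_cast; ring
  rw [this, add_intCast]

end nearestIntDist

lemma Irrational.nearestIntDist_pos {x : ℝ} (hx : Irrational x) : 0 < nearestIntDist x :=
  abs_pos.mpr (sub_ne_zero.mpr (hx.ne_int _))

lemma abs_sub_lt_abs_of_mul_pos {R : Type*} [CommRing R] [LinearOrder R] [IsStrictOrderedRing R]
    {a b : R} (hab : 0 < a * b) (h : |b| < |a|) : |b - a| < |a| := by
  rcases lt_or_gt_of_ne (left_ne_zero_of_mul hab.ne') with ha | ha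
  · have hb : b < 0 := neg_of_mul_pos_right hab ha.le
    rw [abs_of_neg ha, abs_of_neg hb] at h
    rw [abs_of_neg ha, abs_lt]
    constructor <;> linarith
  · have hb : 0 < b := pos_of_mul_pos_right hab ha.le
    rw [abs_of_pos ha, abs_of_pos hb] at h
    rw [abs_of_pos ha, abs_lt]
    constructor <;> linarith

lemma pairCorrFn_eq_zero_of_forall_lt (x : ℕ → ℝ) (s : ℝ) (N : ℕ)
    (h : ∀ i ∈ Icc 1 N, ∀ j ∈ Icc 1 N, i ≠ j → s / N < nearestIntDist (x i - x j)) :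
    pairCorrFn x s N = 0 := by
  rw [pairCorrFn, mul_eq_zero]
  right
  simp only [Nat.cast_eq_zero, card_eq_zero, filter_eq_empty_iff, mem_product, not_and, not_le]
  exact fun p hp hne => h p.1 hp.1 p.2 hp.2 hne

lemma card_offDiag_div_le_pairCorrFn (x : ℕ → ℝ) {s : ℝ} (hs : 0 ≤ s) (N : ℕ) {S : Finset ℕ}
    (hSN : S ⊆ Icc 1 N) (hx : ∀ i ∈ S, ∀ j ∈ S, x i = x j) :
    (#S.offDiag : ℝ) / N ≤ pairCorrFn x s N := by
  rw [pairCorrFn, one_div_mul_eq_div]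
  gcongr
  intro p hp
  obtain ⟨hp₁, hp₂, hne⟩ := mem_offDiag.mp hp
  simp only [mem_filter, mem_product, hSN hp₁, hSN hp₂, hx p.1 hp₁ p.2 hp₂, sub_self,
    nearestIntDist.zero, and_self, true_and]
  exact ⟨hne, by positivity⟩

lemma one_lt_two_mul_nearestIntDist_of_isLeast (α : ℝ) {q N : ℕ} (hq : 0 < q) (hqN : q < N)
    (hN : nearestIntDist (N * α) < nearestIntDist (q * α))
    (hmin : ∀ d : ℕ, 0 < d → d < N → nearestIntDist (q * α) ≤ nearestIntDist (d * α)) :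
    1 < 2 * N * nearestIntDist (q * α) := by
  set θ := q * α - round (q * α) with hθ
  set θ' := N * α - round (N * α) with hθ'
  have hθq : nearestIntDist (q * α) = |θ| := rfl
  change |θ'| < |θ| at hN
  rw [hθq] at hmin ⊢
  have hsign : θ * θ' ≤ 0 := by
    by_contra! hpos
    have hclose : nearestIntDist ((N - q : ℕ) * α) ≤ |θ' - θ| := by
      convert nearestIntDist.le_abs_sub_intCast _ (round (N * α) - round (q * α)) using 2
      push_cast [Nat.cast_sub hqN.le]
      ring
    have hfar := hmin (N - q) (by omega) (by omega)
    linarith [abs_sub_lt_abs_of_mul_pos hpos hN]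
  set D : ℤ := q * round (N * α) - N * round (q * α)
  have hD : (D : ℝ) = N * θ - q * θ' := by
    simp only [D, hθ, hθ']
    push_cast
    ring
  have hD0 : D ≠ 0 := by
    intro h0
    rw [h0, Int.cast_zero] at hD
    have hNθ : N * θ ^ 2 = q * (θ * θ') := by linear_combination -θ * hD
    have hNpos : (0 : ℝ) < N := by exact_mod_cast hq.trans hqN
    have hθpos : 0 < |θ| := (abs_nonneg θ').trans_lt hN
    nlinarith [sq_abs θ, mul_pos hNpos (pow_pos hθpos 2),
      mul_nonneg q.cast_nonneg (neg_nonneg.mpr hsign)]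
  have hNr : (q : ℝ) < N := by exact_mod_cast hqN
  calc (1 : ℝ) ≤ |(D : ℝ)| := by exact_mod_cast Int.one_le_abs hD0
    _ ≤ N * |θ| + q * |θ'| := by
        rw [hD]
        refine (abs_sub _ _).trans ?_
        simp [abs_mul]
    _ < 2 * N * |θ| := by nlinarith [abs_nonneg θ']

lemma exists_gt_forall_nearestIntDist_lt {α : ℝ} (hα : Irrational α) (n : ℕ) :
    ∃ N, n < N ∧ ∀ d : ℕ, 0 < d → d < N → nearestIntDist (N * α) < nearestIntDist (d * α) := by
  classical
  obtain ⟨q, hq, hqmin⟩ :=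
    (Icc 1 (n + 1)).exists_min_image (fun d : ℕ => nearestIntDist (d * α)) ⟨1, by simp⟩
  have hv : 0 < nearestIntDist (q * α) :=
    (hα.natCast_mul (Nat.one_le_iff_ne_zero.mp (mem_Icc.mp hq).1)).nearestIntDist_pos
  obtain ⟨m, hm⟩ := exists_nat_one_div_lt hv
  obtain ⟨k, hk, -, hkm⟩ := Real.exists_nat_abs_mul_sub_round_le α m.succ_pos
  have hex : ∃ N : ℕ, 0 < N ∧ nearestIntDist (N * α) < nearestIntDist (q * α) := by
    refine ⟨k, hk, hkm.trans_lt (lt_of_le_of_lt ?_ hm)⟩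
    gcongr
    linarith
  obtain ⟨hN, hNq⟩ := Nat.find_spec hex
  refine ⟨Nat.find hex, ?_, fun d hd hdN => hNq.trans_le ?_⟩
  · by_contra! h
    exact (hqmin _ (mem_Icc.mpr ⟨hN, by omega⟩)).not_gt hNq
  · by_contra! h
    exact Nat.find_min hex hdN ⟨hd, h⟩

lemma one_div_two_mul_lt_nearestIntDist (α : ℝ) {N : ℕ} (hN : 1 < N)
    (hrec : ∀ d : ℕ, 0 < d → d < N → nearestIntDist (N * α) < nearestIntDist (d * α))
    {d : ℕ} (hd : 0 < d) (hdN : d < N) :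
    1 / (2 * N) < nearestIntDist (d * α) := by
  obtain ⟨q, hq, hqmin⟩ :=
    (Icc 1 (N - 1)).exists_min_image (fun d : ℕ => nearestIntDist (d * α)) ⟨1, by simp; omega⟩
  rw [mem_Icc] at hq
  have hmin : ∀ d : ℕ, 0 < d → d < N → nearestIntDist (q * α) ≤ nearestIntDist (d * α) :=
    fun d hd hdN => hqmin d (mem_Icc.mpr ⟨hd, by omega⟩)
  have := one_lt_two_mul_nearestIntDist_of_isLeast α (by omega) (by omega)
    (hrec q (by omega) (by omega)) hmin
  calc 1 / (2 * N) < nearestIntDist (q * α) := by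
        rw [div_lt_iff₀ (by positivity)]
        linarith
    _ ≤ nearestIntDist (d * α) := hmin d hd hdN

lemma frequently_pairCorrFn_kronecker_eq_zero {α : ℝ} (hα : Irrational α) {s : ℝ}
    (hs : s ≤ 1 / 2) : ∃ᶠ N in atTop, pairCorrFn (fun n => Int.fract (n * α)) s N = 0 := by
  rw [frequently_atTop]
  intro n
  obtain ⟨N, hnN, hrec⟩ := exists_gt_forall_nearestIntDist_lt hα (n + 1)
  have hsN : s / N ≤ 1 / (2 * N) := by
    rw [← div_div]
    gcongr
  have hfar : ∀ i j : ℕ, 0 < j → j < i → i ≤ N →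
      s / N < nearestIntDist (Int.fract (i * α) - Int.fract (j * α)) := by
    intro i j hj hji hiN
    rw [nearestIntDist.fract_sub_fract, ← sub_mul, ← Nat.cast_sub hji.le]
    exact hsN.trans_lt (one_div_two_mul_lt_nearestIntDist α (by omega) hrec (by omega) (by omega))
  refine ⟨N, by omega, pairCorrFn_eq_zero_of_forall_lt _ _ _ fun i hi j hj hij => ?_⟩
  rw [mem_Icc] at hi hj
  rcases hij.lt_or_gt with h | h
  · rw [nearestIntDist.sub_comm]
    exact hfar j i hi.1 h hj.2
  · exact hfar i j hj.1 h hi.2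

lemma sub_one_div_den_le_pairCorrFn_kronecker (r : ℚ) {s : ℝ} (hs : 0 ≤ s) {M : ℕ} (hM : 0 < M) :
    ((M : ℝ) - 1) / r.den ≤ pairCorrFn (fun n => Int.fract (n * (r : ℝ))) s (r.den * M) := by
  have hS : #((Icc 1 M).image (r.den * ·)) = M := by
    rw [card_image_of_injective _ (mul_right_injective₀ r.den_ne_zero), Nat.card_Icc,
      Nat.add_sub_cancel]
  have hfract : ∀ k : ℕ, Int.fract (((r.den * k : ℕ) : ℝ) * r) = 0 := by
    intro k
    have : ((r.den * k : ℕ) : ℝ) * r = ((k * r.num : ℤ) : ℝ) := by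
      have hr : (r.den : ℝ) * r = r.num := by exact_mod_cast Rat.den_mul_eq_num r
      push_cast
      rw [mul_comm (r.den : ℝ), mul_assoc, hr]
    rw [this, Int.fract_intCast]
  refine le_trans (le_of_eq ?_) (card_offDiag_div_le_pairCorrFn _ hs _
    (S := (Icc 1 M).image (r.den * ·)) ?_ ?_)
  · rw [offDiag_card, hS, Nat.cast_sub (Nat.le_mul_self M)]
    have : (M : ℝ) ≠ 0 := by positivity
    push_cast
    field_simp
  · intro i hi
    obtain ⟨k, hk, rfl⟩ := mem_image.mp hi
    rw [mem_Icc] at hk ⊢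
    constructor
    · exact Nat.mul_pos r.pos hk.1
    · exact Nat.mul_le_mul_left _ hk.2
  · intro i hi j hj
    obtain ⟨k, -, rfl⟩ := mem_image.mp hi
    obtain ⟨l, -, rfl⟩ := mem_image.mp hj
    simp only [hfract]

lemma frequently_le_pairCorrFn_kronecker {α : ℝ} (hα : ¬ Irrational α) {s : ℝ} (hs : 0 ≤ s)
    (C : ℝ) : ∃ᶠ N in atTop, C ≤ pairCorrFn (fun n => Int.fract (n * α)) s N := by
  obtain ⟨r, rfl⟩ : α ∈ Set.range ((↑) : ℚ → ℝ) := not_not.mp hα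
  rw [frequently_atTop]
  intro n
  set M := n + r.den * ⌈C⌉₊ + 1 with hM
  refine ⟨r.den * M, ?_,
    le_trans ?_ (sub_one_div_den_le_pairCorrFn_kronecker r hs (M := M) (by omega))⟩
  · exact le_trans (by omega) (Nat.le_mul_of_pos_left M r.pos)
  · have hden : (0 : ℝ) < r.den := by exact_mod_cast r.pos
    rw [le_div_iff₀ hden, hM]
    push_cast
    nlinarith [Nat.le_ceil C, (n.cast_nonneg : (0 : ℝ) ≤ n)]

/-- For every real `α` the pure Kronecker sequence `({n α})_{n ≥ 1}` does not have
Poissonian pair correlations. -/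
theorem kronecker_not_poissonian (α : ℝ) :
    ¬ HasPoissonianPairCorrelations (fun n => Int.fract ((n : ℝ) * α)) := by
  intro h
  have hlim := h (1 / 4) (by norm_num)
  by_cases hα : Irrational α
  · have := tendsto_nhds_unique_of_frequently_eq hlim tendsto_const_nhds
      (frequently_pairCorrFn_kronecker_eq_zero hα (by norm_num))
    norm_num at this
  · have hsmall := hlim.eventually (eventually_lt_nhds (by norm_num : 2 * (1 / 4 : ℝ) < 1))
    obtain ⟨N, hbig, hlt⟩ := ((frequently_le_pairCorrFn_kronecker hα (s := 1 / 4)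
      (by norm_num) 1).and_eventually hsmall).exists
    linarith
end

section
/- Let B₀, B₁, …, B_{q−1} be q intervals, each of length B, let 0 < τ ≤ B/2 with B/τ an integer, and suppose for each i = 0,…,q−1 there are L_i points x_1^(i), …, x_{L_i}^(i) in B_i, where L₀ + L₁ + ⋯ + L_{q−1} = (B/τ + 1)·q·ψ with ψ ≥ 3. Then Σ_{i=0}^{q−1} #{1 ≤ k ≠ l ≤ L_i : |x_k^(i) − x_l^(i)| < τ} ≥ (Bq/(2τ))·(ψ − 2)². -/
private lemma close_pairs_aux (u v ψ Q : ℝ) (hu : 2 ≤ u) (hv : 1 ≤ v) (hψ : 3 ≤ ψ)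
    (hCS : ((u + 1) * v * ψ) ^ 2 ≤ v * u * Q) :
    u * v / 2 * (ψ - 2) ^ 2 ≤ Q - (u + 1) * v * ψ := by
  have hqm : (0:ℝ) < v * u := by nlinarith
  have h1 : u ^ 2 * (ψ - 2) ^ 2 / 2 + u * (u + 1) * ψ ≤ (u + 1) ^ 2 * ψ ^ 2 := by
    nlinarith [mul_nonneg (mul_nonneg (by linarith : (0:ℝ) ≤ u) (by linarith : (0:ℝ) ≤ ψ))
        (by linarith : (0:ℝ) ≤ ψ),
      mul_nonneg (sq_nonneg u) (by nlinarith : (0:ℝ) ≤ ψ ^ 2 / 2 + ψ - 2)]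
  have h2 : v * u * (u * v / 2 * (ψ - 2) ^ 2 + (u + 1) * v * ψ) ≤ ((u + 1) * v * ψ) ^ 2 := by
    have h3 := mul_le_mul_of_nonneg_left h1 (sq_nonneg v)
    nlinarith [h3]
  have h4 : u * v / 2 * (ψ - 2) ^ 2 + (u + 1) * v * ψ ≤ Q :=
    le_of_mul_le_mul_left (h2.trans hCS) hqm
  linarith

/-- Lemma 2: given `q` intervals of length `B` each, `0 < τ ≤ B/2` with `B/τ ∈ ℕ`,
and `L_i` points in the `i`-th interval with `L₀ + ⋯ + L_{q−1} = (B/τ + 1)·q·ψ`,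
`ψ ≥ 3`, the total number of ordered pairs of points at distance `< τ` within the
same interval is at least `(Bq/(2τ))·(ψ − 2)²`. -/
theorem close_pairs_lower_bound_many_intervals
    (B τ : ℝ) (hτ : 0 < τ) (hτB : τ ≤ B / 2)
    (m : ℕ) (hm : B / τ = (m : ℝ))
    (q : ℕ)
    (t : ℕ → ℝ)
    (L : ℕ → ℕ)
    (x : ℕ → ℕ → ℝ)
    (hx : ∀ i < q, ∀ k, 1 ≤ k → k ≤ L i → x i k ∈ Set.Ico (t i) (t i + B))
    (ψ : ℝ) (hψ : 3 ≤ ψ)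
    (hsum : ((∑ i ∈ Finset.range q, L i : ℕ) : ℝ) = ((m : ℝ) + 1) * q * ψ) :
    B * q / (2 * τ) * (ψ - 2) ^ 2 ≤
      ((∑ i ∈ Finset.range q,
        ((Finset.Icc 1 (L i) ×ˢ Finset.Icc 1 (L i)).filter
          (fun p => p.1 ≠ p.2 ∧ |x i p.1 - x i p.2| < τ)).card : ℕ) : ℝ) := by
  rcases Nat.eq_zero_or_pos q with hq | hq
  · subst hq; simp
  have hB : B = m * τ := by field_simp at hm; linarith
  have hm2 : 2 ≤ m := by
    have h2 : (2 : ℝ) ≤ (m : ℝ) := by rw [← hm, le_div_iff₀ hτ]; linarith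
    exact_mod_cast h2
  set f : ℕ → ℕ → ℕ := fun i k => (⌊(x i k - t i) / τ⌋).toNat with hf
  set S : ℕ → ℕ → Finset ℕ :=
    fun i j => (Finset.Icc 1 (L i)).filter (fun k => f i k = j) with hS
  have hfl0 : ∀ i < q, ∀ k ∈ Finset.Icc 1 (L i), 0 ≤ ⌊(x i k - t i) / τ⌋ := by
    intro i hi k hk
    rw [Finset.mem_Icc] at hk
    obtain ⟨hx1, _⟩ := hx i hi k hk.1 hk.2
    exact Int.floor_nonneg.2 (div_nonneg (by linarith) hτ.le)
  have hfm : ∀ i < q, ∀ k ∈ Finset.Icc 1 (L i), f i k ∈ Finset.range m := by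
    intro i hi k hk
    have h0 := hfl0 i hi k hk
    rw [Finset.mem_Icc] at hk
    obtain ⟨hx1, hx2⟩ := hx i hi k hk.1 hk.2
    have h1 : (x i k - t i) / τ < (m : ℝ) := by rw [div_lt_iff₀ hτ]; nlinarith
    have hfl : ⌊(x i k - t i) / τ⌋ < (m : ℤ) := Int.floor_lt.2 (by exact_mod_cast h1)
    simp only [hf, Finset.mem_range]
    omega
  have hsumL : ∀ i < q, ∑ j ∈ Finset.range m, (S i j).card = L i := by
    intro i hi
    rw [hS]
    rw [← Finset.card_eq_sum_card_fiberwise (hfm i hi), Nat.card_Icc]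
    omega
  -- points in the same fiber are at distance < τ
  have hclose : ∀ i < q, ∀ j, ∀ k ∈ S i j, ∀ l ∈ S i j, |x i k - x i l| < τ := by
    intro i hi j k hk l hl
    simp only [hS, Finset.mem_filter] at hk hl
    have hkf := hfl0 i hi k hk.1
    have hlf := hfl0 i hi l hl.1
    have hflr : ⌊(x i k - t i) / τ⌋ = ⌊(x i l - t i) / τ⌋ := by
      have := hk.2; have := hl.2; simp only [hf] at *; omega
    have h1 : |(x i k - t i) / τ - (x i l - t i) / τ| < 1 :=
      Int.abs_sub_lt_one_of_floor_eq_floor hflr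
    have h2 : (x i k - t i) / τ - (x i l - t i) / τ = (x i k - x i l) / τ := by ring
    rw [h2, abs_div, abs_of_pos hτ, div_lt_one hτ] at h1
    linarith
  -- the close-pairs set for interval i contains all off-diagonal pairs of each fiber
  have hcard : ∀ i < q, ∑ j ∈ Finset.range m, (S i j).offDiag.card ≤
      ((Finset.Icc 1 (L i) ×ˢ Finset.Icc 1 (L i)).filter
          (fun p => p.1 ≠ p.2 ∧ |x i p.1 - x i p.2| < τ)).card := by
    intro i hi
    have hdisj : ∀ j1 ∈ Finset.range m, ∀ j2 ∈ Finset.range m, j1 ≠ j2 →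
        Disjoint (S i j1).offDiag (S i j2).offDiag := by
      intro j1 _ j2 _ hne
      rw [Finset.disjoint_left]
      intro p hp1 hp2
      rw [Finset.mem_offDiag] at hp1 hp2
      have h1 := hp1.1; have h2 := hp2.1
      simp only [hS, Finset.mem_filter] at h1 h2
      exact hne (h1.2 ▸ h2.2 ▸ rfl)
    rw [← Finset.card_biUnion hdisj]
    apply Finset.card_le_card
    intro p hp
    simp only [Finset.mem_biUnion] at hp
    obtain ⟨j, hj, hp⟩ := hp
    rw [Finset.mem_offDiag] at hp
    obtain ⟨h1, h2, hne⟩ := hp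
    have h1' : p.1 ∈ Finset.Icc 1 (L i) := (Finset.mem_filter.1 h1).1
    have h2' : p.2 ∈ Finset.Icc 1 (L i) := (Finset.mem_filter.1 h2).1
    rw [Finset.mem_filter, Finset.mem_product]
    exact ⟨⟨h1', h2'⟩, hne, hclose i hi j p.1 h1 p.2 h2⟩
  -- pass to reals
  have key : (∑ i ∈ Finset.range q, ∑ j ∈ Finset.range m, ((S i j).offDiag.card : ℝ)) ≤
      ((∑ i ∈ Finset.range q,
        ((Finset.Icc 1 (L i) ×ˢ Finset.Icc 1 (L i)).filter
          (fun p => p.1 ≠ p.2 ∧ |x i p.1 - x i p.2| < τ)).card : ℕ) : ℝ) := by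
    push_cast
    apply Finset.sum_le_sum
    intro i hi
    rw [Finset.mem_range] at hi
    exact_mod_cast Nat.cast_le.2 (hcard i hi)
  refine le_trans ?_ key
  -- now a purely arithmetic inequality
  have hoff : ∀ i j, ((S i j).offDiag.card : ℝ) =
      ((S i j).card : ℝ) ^ 2 - ((S i j).card : ℝ) := by
    intro i j
    rw [Finset.offDiag_card]
    have hle : (S i j).card ≤ (S i j).card * (S i j).card := by nlinarith
    rw [Nat.cast_sub hle]
    push_cast
    ring
  set P := (Finset.range q) ×ˢ (Finset.range m) with hP
  have hPcard : ((P.card : ℕ) : ℝ) = (q : ℝ) * m := by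
    rw [hP, Finset.card_product]
    push_cast [Finset.card_range]
    ring
  have hNsum : ∑ p ∈ P, ((S p.1 p.2).card : ℝ) = ((m : ℝ) + 1) * q * ψ := by
    rw [hP, Finset.sum_product, ← hsum]
    push_cast
    apply Finset.sum_congr rfl
    intro i hi
    rw [Finset.mem_range] at hi
    rw [← hsumL i hi]
    push_cast
    rfl
  have hCS : (∑ p ∈ P, ((S p.1 p.2).card : ℝ)) ^ 2 ≤
      (P.card : ℝ) * ∑ p ∈ P, ((S p.1 p.2).card : ℝ) ^ 2 :=
    sq_sum_le_card_mul_sum_sq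
  have hsum2 : ∑ i ∈ Finset.range q, ∑ j ∈ Finset.range m, ((S i j).offDiag.card : ℝ)
      = (∑ p ∈ P, ((S p.1 p.2).card : ℝ) ^ 2) - ∑ p ∈ P, ((S p.1 p.2).card : ℝ) := by
    rw [← Finset.sum_sub_distrib, hP, Finset.sum_product]
    exact Finset.sum_congr rfl fun i _ => Finset.sum_congr rfl fun j _ => hoff i j
  rw [hsum2, hNsum]
  rw [hNsum, hPcard] at hCS
  set Q : ℝ := ∑ p ∈ P, ((S p.1 p.2).card : ℝ) ^ 2 with hQ
  have hq1 : (1 : ℝ) ≤ (q : ℝ) := by exact_mod_cast hq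
  have hm2' : (2 : ℝ) ≤ (m : ℝ) := by exact_mod_cast hm2
  have hBq : B * q / (2 * τ) = (m : ℝ) * q / 2 := by
    rw [hB]; field_simp
  rw [hBq]
  exact close_pairs_aux (m:ℝ) (q:ℝ) ψ Q hm2' hq1 hψ hCS
end
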